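/- Let G be the presented group on generators α, α′, β, β′, γ, γ′ with the relations R₆ together with the additional relation α = β. Then G is abelian. -/

import Mathlib

/-- The relations of the reduced braid group `B̄₃`:
`σ₁σ₂σ₁ = σ₂σ₁σ₂` and `(σ₁σ₂)³ = 1`. -/
def bbar3Rels : Set (FreeGroup (Fin 2)) :=
  { FreeGroup.of 0 * FreeGroup.of 1 * FreeGroup.of 0 *
      (FreeGroup.of 1 * FreeGroup.of 0 * FreeGroup.of 1)⁻¹,
    (FreeGroup.of 0 * FreeGroup.of 1) ^ 3 }

/-- The reduced braid group `B̄₃ = ⟨σ₁, σ₂ ∣ σ₁σ₂σ₁ = σ₂σ₁σ₂, (σ₁σ₂)³ = 1⟩`. -/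
abbrev Bbar3 : Type := PresentedGroup bbar3Rels

/-- The generator `σ₁` of `B̄₃`. -/
def σ1 : Bbar3 := PresentedGroup.of 0

/-- The generator `σ₂` of `B̄₃`. -/
def σ2 : Bbar3 := PresentedGroup.of 1

namespace Stmt

def a : FreeGroup (Fin 6) := FreeGroup.of 0
def a' : FreeGroup (Fin 6) := FreeGroup.of 1
def b : FreeGroup (Fin 6) := FreeGroup.of 2
def b' : FreeGroup (Fin 6) := FreeGroup.of 3
def c : FreeGroup (Fin 6) := FreeGroup.of 4
def c' : FreeGroup (Fin 6) := FreeGroup.of 5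

/-- The set of relators. -/
def rels : Set (FreeGroup (Fin 6)) :=
  { (a * b) ^ 3 * ((b * a) ^ 3)⁻¹,
    (a' * b') ^ 3 * ((b' * a') ^ 3)⁻¹,
    (a * b) * a * (a * b)⁻¹ * c⁻¹,
    (a' * b') * a' * (a' * b')⁻¹ * c'⁻¹,
    a * b * a⁻¹ * (a' * b' * a'⁻¹)⁻¹,
    c * b' * (b * c)⁻¹,
    b * c * (b' * c')⁻¹,
    b' * c' * (c' * b)⁻¹,
    a * b * c * a' * b' * c',
    a * b⁻¹ }

end Stmt

section Aux

local notation "G" => PresentedGroup Stmt.rels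

private def mkG : FreeGroup (Fin 6) →* G := QuotientGroup.mk' _

private lemma rel_one : ∀ r ∈ Stmt.rels, mkG r = 1 := fun r hr =>
  (QuotientGroup.eq_one_iff r).2 (Subgroup.subset_normalClosure hr)

private lemma ofG_eq (i : Fin 6) : (PresentedGroup.of i : G) = mkG (FreeGroup.of i) := rfl

private lemma abstract {H : Type*} [Group H] (A A' B B' C C' : H)
    (h3 : A * B * A * (A * B)⁻¹ * C⁻¹ = 1)
    (h4 : A' * B' * A' * (A' * B')⁻¹ * C'⁻¹ = 1)
    (h5 : A * B * A⁻¹ * (A' * B' * A'⁻¹)⁻¹ = 1)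
    (h6 : C * B' * (B * C)⁻¹ = 1)
    (h7 : B * C * (B' * C')⁻¹ = 1)
    (h10 : A * B⁻¹ = 1) :
    A' = A ∧ B = A ∧ B' = A ∧ C = A ∧ C' = A := by
  have hB : B = A := (mul_inv_eq_one.mp h10).symm
  rw [hB] at h3 h5 h6 h7
  have hC : C = A := by
    have h := mul_inv_eq_one.mp h3
    have e : A * A * A * (A * A)⁻¹ = A := by group
    rw [e] at h; exact h.symm
  rw [hC] at h6 h7
  have hB' : B' = A := by
    have h := mul_inv_eq_one.mp h6
    exact mul_left_cancel h
  rw [hB'] at h4 h5 h7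
  have hc : Commute A' A := by
    have h := mul_inv_eq_one.mp h5
    have e : A * A * A⁻¹ = A := by group
    rw [e] at h
    exact mul_inv_eq_iff_eq_mul.mp h.symm
  have hC' : C' = A := by
    have h := mul_inv_eq_one.mp h7
    exact (mul_left_cancel h).symm
  rw [hC'] at h4
  have hA' : A' = A := by
    have h := mul_inv_eq_one.mp h4
    have e : A' * A * A' * (A' * A)⁻¹ = A' := by
      calc A' * A * A' * (A' * A)⁻¹ = A' * (A * A') * A⁻¹ * A'⁻¹ := by group
        _ = A' * (A' * A) * A⁻¹ * A'⁻¹ := by rw [hc.eq]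
        _ = A' := by group
    rw [e] at h
    exact h
  exact ⟨hA', hB, hB', hC, hC'⟩

private lemma gens_eq : ∀ i : Fin 6, (PresentedGroup.of i : G) = PresentedGroup.of 0 := by
  have h3 : mkG ((Stmt.a * Stmt.b) * Stmt.a * (Stmt.a * Stmt.b)⁻¹ * Stmt.c⁻¹) = 1 :=
    rel_one _ (Or.inr (Or.inr (Or.inl rfl)))
  have h4 : mkG ((Stmt.a' * Stmt.b') * Stmt.a' * (Stmt.a' * Stmt.b')⁻¹ * Stmt.c'⁻¹) = 1 :=
    rel_one _ (Or.inr (Or.inr (Or.inr (Or.inl rfl))))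
  have h5 : mkG (Stmt.a * Stmt.b * Stmt.a⁻¹ * (Stmt.a' * Stmt.b' * Stmt.a'⁻¹)⁻¹) = 1 :=
    rel_one _ (Or.inr (Or.inr (Or.inr (Or.inr (Or.inl rfl)))))
  have h6 : mkG (Stmt.c * Stmt.b' * (Stmt.b * Stmt.c)⁻¹) = 1 :=
    rel_one _ (Or.inr (Or.inr (Or.inr (Or.inr (Or.inr (Or.inl rfl))))))
  have h7 : mkG (Stmt.b * Stmt.c * (Stmt.b' * Stmt.c')⁻¹) = 1 :=
    rel_one _ (Or.inr (Or.inr (Or.inr (Or.inr (Or.inr (Or.inr (Or.inl rfl)))))))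
  have h10 : mkG (Stmt.a * Stmt.b⁻¹) = 1 :=
    rel_one _ (Or.inr (Or.inr (Or.inr (Or.inr (Or.inr (Or.inr (Or.inr (Or.inr (Or.inr rfl)))))))))
  simp only [Stmt.a, Stmt.a', Stmt.b, Stmt.b', Stmt.c, Stmt.c', map_mul, map_inv,
    ← ofG_eq] at h3 h4 h5 h6 h7 h10
  obtain ⟨hA', hB, hB', hC, hC'⟩ :=
    abstract (PresentedGroup.of 0 : G) (PresentedGroup.of 1) (PresentedGroup.of 2)
      (PresentedGroup.of 3) (PresentedGroup.of 4) (PresentedGroup.of 5) h3 h4 h5 h6 h7 h10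
  intro i
  fin_cases i <;> simp_all

private lemma mem_zpowers (x : G) : x ∈ Subgroup.zpowers (PresentedGroup.of 0 : G) := by
  obtain ⟨w, rfl⟩ := QuotientGroup.mk'_surjective (Subgroup.normalClosure Stmt.rels) x
  refine FreeGroup.induction_on
    (C := fun w => mkG w ∈ Subgroup.zpowers (PresentedGroup.of 0 : G)) w ?_ ?_ ?_ ?_
  · simpa using one_mem _
  · intro i
    have key : mkG (FreeGroup.of i) = (PresentedGroup.of 0 : G) := gens_eq i
    rw [key]; exact Subgroup.mem_zpowers _
  · intro i _
    have key : mkG (FreeGroup.of i) = (PresentedGroup.of 0 : G) := gens_eq i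
    rw [show (FreeGroup.of i : FreeGroup (Fin 6))⁻¹ = (FreeGroup.of i)⁻¹ from rfl, map_inv, key]
    exact inv_mem (Subgroup.mem_zpowers _)
  · intro u v hu hv
    rw [map_mul]; exact mul_mem hu hv

end Aux

/-- Adding the relation `α = β` to the relations R₆, the resulting group is abelian. -/
theorem stmt13 : ∀ x y : PresentedGroup Stmt.rels, x * y = y * x := by
  intro x y
  obtain ⟨m, hm⟩ := mem_zpowers x
  obtain ⟨n, hn⟩ := mem_zpowers y
  rw [← hm, ← hn]
  exact (Commute.refl _).zpow_zpow m n
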